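/- arXiv:2310.10231 — 3 statements merged into one kernel-verified Lean document; each statement's English description precedes it below -/
import Mathlib

section
/- (Theorem 5.2, Eq. (54): first moment.) For every j ∈ {1,2} and every t > 0, v_jt·e^{−ξt}/(1 + λt) + ∫_{ℝ} x·p̃(x,t|v_j) dx = E_j(t), i.e. the mean position of the reset telegraph process at time t, started at 0 with velocity v_j, equals (1 − e^{−ξt})·( (v₁+v₂)/(2ξ) + (v_j − v_{j'})/(2λ) ) − (ξe^{ξ/λ}(v_j − v_{j'})/(2λ²))·Γ(0, ξ/λ, (ξ/λ)(1+λt)) + t·e^{−ξt}(v_j − v_{j'})/(2(1+λt)), where j' = 3 − j. -/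
open MeasureTheory Real Filter Topology Set

noncomputable section

namespace TelegraphReset

open Classical in
/-- Real-valued indicator of a proposition. -/
def ind (P : Prop) : ℝ := if P then 1 else 0

/-- Generalized incomplete gamma function `Γ(0, z₀, z₁) = ∫_{z₀}^{z₁} u⁻¹ e^{-u} du`. -/
def iGamma (z₀ z₁ : ℝ) : ℝ := ∫ u in z₀..z₁, u⁻¹ * Real.exp (-u)

/-- Upper incomplete gamma function `Γ(0, a) = ∫_a^∞ u⁻¹ e^{-u} du`. -/
def uGamma (a : ℝ) : ℝ := ∫ u in Set.Ioi a, u⁻¹ * Real.exp (-u)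

/-- `τ(x,t) = (x - v₂ t)/(v₁ - v₂)`. -/
def tauF (v₁ v₂ x t : ℝ) : ℝ := (x - v₂ * t) / (v₁ - v₂)

/-- The two velocities, indexed by `1` and `2`. -/
def vel (v₁ v₂ : ℝ) : ℕ → ℝ := fun n => if n = 1 then v₁ else v₂

/-- `Γ_λ^ξ(x,t)`, defined piecewise according to the sign of `v₂`. -/
def GamL (v₁ v₂ lam xi x t : ℝ) : ℝ :=
  if v₂ < 0 then iGamma ((max (x / v₁) (x / v₂) + 1 / lam) * xi) ((t + 1 / lam) * xi)
  else iGamma ((x / v₁ + 1 / lam) * xi) ((min (x / v₂) t + 1 / lam) * xi)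

/-- `Θ_λ^ξ(x,t)`, defined piecewise according to the sign of `v₂`. -/
def Theta (v₁ v₂ lam xi x t : ℝ) : ℝ :=
  if v₂ < 0 then
    Real.exp (-(xi * max (x / v₁) (x / v₂))) / (1 + lam * max (x / v₁) (x / v₂))
      - Real.exp (-(xi * t)) / (1 + lam * t)
  else
    Real.exp (-(xi * (x / v₁))) / (1 + lam * (x / v₁))
      - Real.exp (-(xi * min (x / v₂) t)) / (1 + lam * min (x / v₂) t)

/-- Closed-form sub-density `P_{j,j}(x,t)` (Eq. (21)). -/
def Pss (v₁ v₂ lam xi : ℝ) (j : ℕ) (x t : ℝ) : ℝ :=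
  ind (v₂ * t < x ∧ x < v₁ * t) * Real.exp (-(xi * t)) * lam ^ 2 *
      tauF v₁ v₂ x t ^ (2 - j) * (t - tauF v₁ v₂ x t) ^ (j - 1) /
      ((v₁ - v₂) * (1 + lam * t) ^ 2)
  + Real.sign (vel v₁ v₂ j) * ind (0 < x / vel v₁ v₂ j ∧ x / vel v₁ v₂ j < t) * xi *
      Real.exp (-(xi * (x / vel v₁ v₂ j))) / (vel v₁ v₂ j + lam * x)
  + ind (min (v₂ * t) 0 < x ∧ x < v₁ * t) *
      ((-1 : ℝ) ^ (3 - j) * (xi * (vel v₁ v₂ (3 - j) + lam * x) / (v₁ - v₂) ^ 2) *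
          Theta v₁ v₂ lam xi x t
        + (-1 : ℝ) ^ j * (xi * Real.exp (xi / lam) / (v₁ - v₂) ^ 2) *
            (vel v₁ v₂ (3 - j) * (lam + xi) / lam + x * xi) * GamL v₁ v₂ lam xi x t)

/-- Closed-form sub-density `P_{3-j,j}(x,t)` (Eq. (22)). -/
def Pos (v₁ v₂ lam xi : ℝ) (j : ℕ) (x t : ℝ) : ℝ :=
  ind (v₂ * t < x ∧ x < v₁ * t) * Real.exp (-(xi * t)) * lam *
      (1 + lam * tauF v₁ v₂ x t ^ (j - 1) * (t - tauF v₁ v₂ x t) ^ (2 - j)) /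
      ((v₁ - v₂) * (1 + lam * t) ^ 2)
  + ind (min (v₂ * t) 0 < x ∧ x < v₁ * t) *
      ((-1 : ℝ) ^ j * (xi * (vel v₁ v₂ (3 - j) + lam * x) / (v₁ - v₂) ^ 2) *
          Theta v₁ v₂ lam xi x t
        + (-1 : ℝ) ^ (3 - j) * (xi * Real.exp (xi / lam) / (v₁ - v₂) ^ 2) *
            (vel v₁ v₂ j * (lam + xi) / lam + x * xi
              + (-1 : ℝ) ^ j * xi * (v₁ - v₂) / lam) * GamL v₁ v₂ lam xi x t)

/-- Closed-form reset density `p̃(x,t|v_j)` (Eq. (37)). -/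
def pTil (v₁ v₂ lam xi : ℝ) (j : ℕ) (x t : ℝ) : ℝ :=
  Real.sign (vel v₁ v₂ j) * ind (0 < x / vel v₁ v₂ j ∧ x / vel v₁ v₂ j < t) * xi *
      Real.exp (-(xi * (x / vel v₁ v₂ j))) / (vel v₁ v₂ j + lam * x)
  + ind (v₂ * t < x ∧ x < v₁ * t) * lam * Real.exp (-(xi * t)) /
      ((v₁ - v₂) * (1 + lam * t))
  + ind (min (v₂ * t) 0 < x ∧ x < v₁ * t) *
      (xi * Real.exp (xi / lam) / (v₁ - v₂)) * GamL v₁ v₂ lam xi x t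

/-- First moment `E_j[X̃(t)]` (Eq. (54)). -/
def Emom (v₁ v₂ lam xi : ℝ) (j : ℕ) (t : ℝ) : ℝ :=
  (1 - Real.exp (-(xi * t))) *
      ((v₁ + v₂) / (2 * xi) + (vel v₁ v₂ j - vel v₁ v₂ (3 - j)) / (2 * lam))
  - xi * Real.exp (xi / lam) * (vel v₁ v₂ j - vel v₁ v₂ (3 - j)) / (2 * lam ^ 2) *
      iGamma (xi / lam) (xi / lam * (1 + lam * t))
  + t * Real.exp (-(xi * t)) * (vel v₁ v₂ j - vel v₁ v₂ (3 - j)) / (2 * (1 + lam * t))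

/-- Second moment `E_j[X̃²(t)]` (Eq. (55)). -/
def Smom (v₁ v₂ lam xi : ℝ) (j : ℕ) (t : ℝ) : ℝ :=
  (1 - Real.exp (-(xi * t))) *
      (2 * (v₁ ^ 2 + v₁ * v₂ + v₂ ^ 2) / (3 * xi ^ 2)
        + (2 * vel v₁ v₂ j ^ 2 - v₁ * v₂ - vel v₁ v₂ (3 - j) ^ 2) / (3 * lam) *
            (1 / xi - 1 / lam))
  - t * Real.exp (-(xi * t)) *
      (2 * (v₁ ^ 2 + v₁ * v₂ + v₂ ^ 2) / (3 * xi)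
        + (2 * vel v₁ v₂ j ^ 2 - v₁ * v₂ - vel v₁ v₂ (3 - j) ^ 2) /
            (3 * lam * (1 + lam * t)))
  + xi * Real.exp (xi / lam) *
      (2 * vel v₁ v₂ j ^ 2 - v₁ * v₂ - vel v₁ v₂ (3 - j) ^ 2) / (3 * lam ^ 3) *
      iGamma (xi / lam) (xi / lam * (1 + lam * t))

/-- First moment of the reset-free process. -/
def m1 (v₁ v₂ lam : ℝ) (j : ℕ) (t : ℝ) : ℝ :=
  (v₁ + v₂) * t / 2 + (vel v₁ v₂ j - vel v₁ v₂ (3 - j)) * t / (2 * (1 + lam * t))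

/-- Second moment of the reset-free process (Eq. (63)). -/
def m2 (v₁ v₂ lam : ℝ) (j : ℕ) (t : ℝ) : ℝ :=
  t ^ 2 * (3 * vel v₁ v₂ j ^ 2 + lam * t * (v₁ ^ 2 + v₁ * v₂ + v₂ ^ 2)) /
    (3 * (1 + lam * t))

/-! The three terms of `p̃` are integrated against `x` separately. After the substitution
`x = v s`, the ballistic term contributes `v_j ∫₀ᵗ ξ s e^{-ξs}/(1+λs) ds` and the uniform term is
elementary. In both sign cases the incomplete-gamma term is `v₁ h(x/v₁) ∓ v₂ h(x/v₂)` with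
`h(s) = 1_{0<s<t} s Γ(0, (s+1/λ)ξ, (t+1/λ)ξ)` (for `0 < v₂` through
`Γ(0,a,b) = Γ(0,a,c) - Γ(0,b,c)`), so it contributes `(v₁² - v₂²) ∫₀ᵗ h`. The two remaining
one-dimensional integrals have explicit antiderivatives involving `Γ(0, ξ/λ, (s+1/λ)ξ)`. -/

lemma continuousOn_inv_mul_exp_neg : ContinuousOn (fun u : ℝ => u⁻¹ * exp (-u)) (Ioi 0) :=
  (continuousOn_inv₀.mono fun _ hu => ne_of_gt hu).mul (by fun_prop)

lemma intervalIntegrable_inv_mul_exp_neg {a b : ℝ} (ha : 0 < a) (hb : 0 < b) :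
    IntervalIntegrable (fun u : ℝ => u⁻¹ * exp (-u)) volume a b :=
  (continuousOn_inv_mul_exp_neg.mono fun _ hu =>
    lt_of_lt_of_le (lt_min ha hb) hu.1).intervalIntegrable

lemma hasDerivAt_iGamma_right {a b : ℝ} (ha : 0 < a) (hb : 0 < b) :
    HasDerivAt (iGamma a) (b⁻¹ * exp (-b)) b :=
  intervalIntegral.integral_hasDerivAt_right (intervalIntegrable_inv_mul_exp_neg ha hb)
    (continuousOn_inv_mul_exp_neg.stronglyMeasurableAtFilter isOpen_Ioi b hb)
    (continuousOn_inv_mul_exp_neg.continuousAt (Ioi_mem_nhds hb))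

lemma hasDerivAt_iGamma_left {a b : ℝ} (ha : 0 < a) (hb : 0 < b) :
    HasDerivAt (fun a => iGamma a b) (-(a⁻¹ * exp (-a))) a :=
  intervalIntegral.integral_hasDerivAt_left (intervalIntegrable_inv_mul_exp_neg ha hb)
    (continuousOn_inv_mul_exp_neg.stronglyMeasurableAtFilter isOpen_Ioi a ha)
    (continuousOn_inv_mul_exp_neg.continuousAt (Ioi_mem_nhds ha))

lemma iGamma_self (a : ℝ) : iGamma a a = 0 := intervalIntegral.integral_same

lemma iGamma_sub_iGamma {a b c : ℝ} (ha : 0 < a) (hb : 0 < b) (hc : 0 < c) :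
    iGamma a c - iGamma b c = iGamma a b := by
  rw [sub_eq_iff_eq_add]
  exact (intervalIntegral.integral_add_adjacent_intervals
    (intervalIntegrable_inv_mul_exp_neg ha hb) (intervalIntegrable_inv_mul_exp_neg hb hc)).symm

section ShiftedArgument

lemma exp_neg_shift (lam xi s : ℝ) :
    exp (-((s + 1 / lam) * xi)) = exp (-(xi / lam)) * exp (-(xi * s)) := by
  rw [← exp_add]; ring_nf

lemma hasDerivAt_shift (lam xi s : ℝ) : HasDerivAt (fun s : ℝ => (s + 1 / lam) * xi) xi s := by
  simpa using ((hasDerivAt_id s).add_const (1 / lam)).mul_const xi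

variable {lam xi : ℝ}

lemma hasDerivAt_iGamma_shift_right {c s : ℝ} (hc : 0 < c) (hs : 0 < (s + 1 / lam) * xi) :
    HasDerivAt (fun s => iGamma c ((s + 1 / lam) * xi))
      (exp (-(xi / lam)) * exp (-(xi * s)) / (s + 1 / lam)) s := by
  have hxi : xi ≠ 0 := by rintro rfl; simp at hs
  refine ((hasDerivAt_iGamma_right hc hs).comp s (hasDerivAt_shift lam xi s)).congr_deriv ?_
  rw [exp_neg_shift]
  field_simp

lemma hasDerivAt_iGamma_shift_left {c s : ℝ} (hc : 0 < c) (hs : 0 < (s + 1 / lam) * xi) :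
    HasDerivAt (fun s => iGamma ((s + 1 / lam) * xi) c)
      (-(exp (-(xi / lam)) * exp (-(xi * s)) / (s + 1 / lam))) s := by
  have hxi : xi ≠ 0 := by rintro rfl; simp at hs
  refine ((hasDerivAt_iGamma_left hs hc).comp s (hasDerivAt_shift lam xi s)).congr_deriv ?_
  rw [exp_neg_shift]
  field_simp

end ShiftedArgument

section Antiderivatives

variable {lam xi t : ℝ}

lemma continuousOn_mul_iGamma_shift (hlam : 0 < lam) (hxi : 0 < xi) (ht : 0 ≤ t) :
    ContinuousOn (fun s => s * iGamma ((s + 1 / lam) * xi) ((t + 1 / lam) * xi)) (Ici 0) :=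
  fun s hs => (continuousAt_id.mul (hasDerivAt_iGamma_shift_left (by positivity)
    (by have : 0 ≤ s := hs; positivity)).continuousAt).continuousWithinAt

lemma integral_mul_exp_neg_div_one_add_mul (hlam : 0 < lam) (hxi : 0 < xi) (ht : 0 ≤ t) :
    ∫ s in (0:ℝ)..t, xi * s * exp (-(xi * s)) / (1 + lam * s)
      = (1 - exp (-(xi * t))) / lam
        - xi * exp (xi / lam) / lam ^ 2 * iGamma (xi / lam) ((t + 1 / lam) * xi) := by
  have hderiv : ∀ s ∈ uIcc 0 t, HasDerivAt
      (fun s => -exp (-(xi * s)) / lam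
        - xi * exp (xi / lam) / lam ^ 2 * iGamma (xi / lam) ((s + 1 / lam) * xi))
      (xi * s * exp (-(xi * s)) / (1 + lam * s)) s := by
    intro s hs
    have hs0 : 0 ≤ s := by rw [uIcc_of_le ht] at hs; exact hs.1
    have hexp : HasDerivAt (fun s => -exp (-(xi * s)) / lam) (xi * exp (-(xi * s)) / lam) s :=
      ((hasDerivAt_const_mul xi).fun_neg.exp.fun_neg.div_const lam).congr_deriv (by ring)
    have hΓ := (hasDerivAt_iGamma_shift_right (div_pos hxi hlam)
      (by positivity : 0 < (s + 1 / lam) * xi)).const_mul (xi * exp (xi / lam) / lam ^ 2)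
    refine (hexp.sub hΓ).congr_deriv ?_
    rw [exp_neg (xi / lam)]
    field_simp
    ring
  have hcont : ContinuousOn (fun s => xi * s * exp (-(xi * s)) / (1 + lam * s)) (uIcc 0 t) := by
    refine ContinuousOn.div (by fun_prop) (by fun_prop) fun s hs => ?_
    have : 0 ≤ s := by rw [uIcc_of_le ht] at hs; exact hs.1
    positivity
  rw [intervalIntegral.integral_eq_sub_of_hasDerivAt hderiv hcont.intervalIntegrable]
  rw [show (0 + 1 / lam) * xi = xi / lam by ring, iGamma_self]
  simp only [mul_zero, neg_zero, exp_zero]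
  ring

lemma integral_mul_iGamma_shift (hlam : 0 < lam) (hxi : 0 < xi) (ht : 0 ≤ t) :
    ∫ s in (0:ℝ)..t, s * iGamma ((s + 1 / lam) * xi) ((t + 1 / lam) * xi)
      = iGamma (xi / lam) ((t + 1 / lam) * xi) / (2 * lam ^ 2)
        - exp (-(xi / lam)) / 2 *
          ((1 - exp (-(xi * t))) * (1 / (lam * xi) - 1 / xi ^ 2) + t * exp (-(xi * t)) / xi) := by
  set T := (t + 1 / lam) * xi with hT
  have hTpos : 0 < T := by positivity
  have hderiv : ∀ s ∈ uIcc 0 t, HasDerivAt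
      (fun s => s ^ 2 / 2 * iGamma ((s + 1 / lam) * xi) T
        + exp (-(xi / lam)) / 2 * (exp (-(xi * s)) * (1 / (lam * xi) - 1 / xi ^ 2 - s / xi))
        + iGamma (xi / lam) ((s + 1 / lam) * xi) / (2 * lam ^ 2))
      (s * iGamma ((s + 1 / lam) * xi) T) s := by
    intro s hs
    have hs0 : 0 ≤ s := by rw [uIcc_of_le ht] at hs; exact hs.1
    have hshift : 0 < (s + 1 / lam) * xi := by positivity
    have hsq : HasDerivAt (fun s : ℝ => s ^ 2 / 2) s s := by
      simpa using (hasDerivAt_pow 2 s).div_const 2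
    have hexp : HasDerivAt (fun s => exp (-(xi * s)) * (1 / (lam * xi) - 1 / xi ^ 2 - s / xi))
        (exp (-(xi * s)) * (-xi) * (1 / (lam * xi) - 1 / xi ^ 2 - s / xi)
          + exp (-(xi * s)) * (-(1 / xi))) s :=
      (hasDerivAt_const_mul xi).fun_neg.exp.mul
        (((hasDerivAt_id' s).div_const xi).const_sub _)
    refine (((hsq.mul (hasDerivAt_iGamma_shift_left hTpos hshift)).add
      (hexp.const_mul _)).add
      ((hasDerivAt_iGamma_shift_right (div_pos hxi hlam) hshift).div_const _)).congr_deriv ?_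
    field_simp
    ring
  have hcont := (continuousOn_mul_iGamma_shift hlam hxi ht).mono
    (uIcc_of_le ht ▸ Icc_subset_Ici_self : uIcc 0 t ⊆ Ici 0)
  rw [intervalIntegral.integral_eq_sub_of_hasDerivAt hderiv hcont.intervalIntegrable]
  rw [show (0 + 1 / lam) * xi = xi / lam by ring, iGamma_self, iGamma_self]
  simp only [mul_zero, neg_zero, exp_zero]
  ring

end Antiderivatives

lemma ind_mul_eq_indicator (s : Set ℝ) (f : ℝ → ℝ) (x : ℝ) :
    ind (x ∈ s) * f x = s.indicator f x := by
  by_cases hx : x ∈ s <;> simp [ind, hx]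

lemma integrable_indicator_Ioo {f : ℝ → ℝ} {a b : ℝ} (hf : ContinuousOn f (Icc a b)) :
    Integrable ((Ioo a b).indicator f) :=
  (integrable_indicator_iff measurableSet_Ioo).mpr
    (hf.integrableOn_Icc.mono_set Ioo_subset_Icc_self)

lemma integral_indicator_Ioo {f : ℝ → ℝ} {a b : ℝ} (hab : a ≤ b) :
    ∫ x, (Ioo a b).indicator f x = ∫ x in a..b, f x := by
  rw [integral_indicator measurableSet_Ioo, ← integral_Ioc_eq_integral_Ioo,
    intervalIntegral.integral_of_le hab]

lemma integral_mul_ind_Ioo {a b : ℝ} (hab : a ≤ b) (c : ℝ) :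
    Integrable (fun x => x * (ind (a < x ∧ x < b) * c))
      ∧ ∫ x, x * (ind (a < x ∧ x < b) * c) = c * (b ^ 2 - a ^ 2) / 2 := by
  have hfun : (fun x => x * (ind (a < x ∧ x < b) * c)) = (Ioo a b).indicator (· * c) := by
    ext x
    rw [← ind_mul_eq_indicator]
    exact mul_left_comm _ _ _
  rw [hfun, integral_indicator_Ioo hab, intervalIntegral.integral_mul_const, integral_id]
  exact ⟨integrable_indicator_Ioo (by fun_prop), by ring⟩

section Ballistic

variable {lam xi t w : ℝ}

lemma mul_ballistic_eq_indicator (hlam : 0 ≤ lam) (hw : w ≠ 0) (x : ℝ) :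
    x * (Real.sign w * ind (0 < x / w ∧ x / w < t) * xi * exp (-(xi * (x / w))) / (w + lam * x))
      = Real.sign w *
          (Ioo 0 t).indicator (fun s => xi * s * exp (-(xi * s)) / (1 + lam * s)) (x / w) := by
  obtain ⟨s, rfl⟩ : ∃ s, x = w * s := ⟨x / w, by field_simp⟩
  rw [mul_div_cancel_left₀ s hw, ← ind_mul_eq_indicator]
  by_cases hs : 0 < s ∧ s < t
  · have hden : 1 + lam * s ≠ 0 := by have := hs.1; positivity
    simp only [ind, mem_Ioo, if_pos hs]
    field_simp
  · simp [ind, hs]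

lemma integral_mul_ballistic (hlam : 0 ≤ lam) (ht : 0 ≤ t) (hw : w ≠ 0) :
    Integrable (fun x => x * (Real.sign w * ind (0 < x / w ∧ x / w < t) * xi *
        exp (-(xi * (x / w))) / (w + lam * x)))
      ∧ ∫ x, x * (Real.sign w * ind (0 < x / w ∧ x / w < t) * xi *
          exp (-(xi * (x / w))) / (w + lam * x))
        = w * ∫ s in (0:ℝ)..t, xi * s * exp (-(xi * s)) / (1 + lam * s) := by
  simp_rw [mul_ballistic_eq_indicator hlam hw]
  have hcont : ContinuousOn (fun s => xi * s * exp (-(xi * s)) / (1 + lam * s)) (Icc 0 t) :=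
    ContinuousOn.div (by fun_prop) (by fun_prop) fun s hs => by have := hs.1; positivity
  refine ⟨((integrable_indicator_Ioo hcont).comp_div hw).const_mul _, ?_⟩
  rw [integral_const_mul, Measure.integral_comp_div, integral_indicator_Ioo ht, smul_eq_mul,
    ← mul_assoc]
  congr 1
  rcases hw.lt_or_gt with hw | hw
  · rw [Real.sign_of_neg hw, abs_of_neg hw]; ring
  · rw [Real.sign_of_pos hw, abs_of_pos hw]; ring

end Ballistic

section GammaTerm

variable {v₁ v₂ lam xi t : ℝ}

def gammaKernel (lam xi t : ℝ) : ℝ → ℝ :=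
  (Ioo 0 t).indicator fun s => s * iGamma ((s + 1 / lam) * xi) ((t + 1 / lam) * xi)

lemma gammaKernel_of_nonpos {s : ℝ} (hs : s ≤ 0) : gammaKernel lam xi t s = 0 :=
  indicator_of_notMem (fun h => hs.not_gt h.1) _

lemma mul_gammaKernel_div_of_pos {v x : ℝ} (hx : 0 < x / v) :
    v * gammaKernel lam xi t (x / v)
      = x * iGamma ((min (x / v) t + 1 / lam) * xi) ((t + 1 / lam) * xi) := by
  have hv : v ≠ 0 := by rintro rfl; simp at hx
  by_cases hxt : x / v < t
  · rw [gammaKernel, indicator_of_mem (show x / v ∈ Ioo 0 t from ⟨hx, hxt⟩),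
      min_eq_left hxt.le, ← mul_assoc, mul_div_cancel₀ x hv]
  · rw [gammaKernel, indicator_of_notMem fun h => hxt h.2, min_eq_right (not_lt.mp hxt),
      iGamma_self]
    simp

lemma mul_ind_GamL_of_neg (hv₂ : v₂ < 0) (hv₁ : 0 < v₁) (ht : 0 ≤ t) (x : ℝ) :
    x * (ind (min (v₂ * t) 0 < x ∧ x < v₁ * t) * GamL v₁ v₂ lam xi x t)
      = v₁ * gammaKernel lam xi t (x / v₁) + v₂ * gammaKernel lam xi t (x / v₂) := by
  rw [min_eq_left (by nlinarith), GamL, if_pos hv₂]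
  rcases lt_trichotomy x 0 with hx | rfl | hx
  · have hx₂ : 0 < x / v₂ := div_pos_of_neg_of_neg hx hv₂
    have hx₁ : x / v₁ ≤ 0 := div_nonpos_of_nonpos_of_nonneg hx.le hv₁.le
    rw [gammaKernel_of_nonpos hx₁, mul_zero, zero_add, mul_gammaKernel_div_of_pos hx₂,
      max_eq_right (hx₁.trans hx₂.le)]
    by_cases h : v₂ * t < x
    · have hxt : x / v₂ < t := (div_lt_iff_of_neg hv₂).mpr (by linarith)
      have hind : v₂ * t < x ∧ x < v₁ * t := ⟨h, by nlinarith⟩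
      simp [ind, hind, min_eq_left hxt.le]
    · have hxt : t ≤ x / v₂ := (le_div_iff_of_neg hv₂).mpr (by linarith)
      simp [ind, h, min_eq_right hxt, iGamma_self]
  · simp [gammaKernel_of_nonpos le_rfl]
  · have hx₁ : 0 < x / v₁ := div_pos hx hv₁
    have hx₂ : x / v₂ ≤ 0 := div_nonpos_of_nonneg_of_nonpos hx.le hv₂.le
    rw [gammaKernel_of_nonpos hx₂, mul_zero, add_zero, mul_gammaKernel_div_of_pos hx₁,
      max_eq_left (hx₂.trans hx₁.le)]
    by_cases h : x < v₁ * t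
    · have hxt : x / v₁ < t := (div_lt_iff₀ hv₁).mpr (by linarith)
      have hind : v₂ * t < x ∧ x < v₁ * t := ⟨by nlinarith, h⟩
      simp [ind, hind, min_eq_left hxt.le]
    · have hxt : t ≤ x / v₁ := (le_div_iff₀ hv₁).mpr (by linarith)
      simp [ind, h, min_eq_right hxt, iGamma_self]

lemma mul_ind_GamL_of_pos (hv₂ : 0 < v₂) (hv : v₂ < v₁) (hlam : 0 < lam) (hxi : 0 < xi)
    (ht : 0 ≤ t) (x : ℝ) :
    x * (ind (min (v₂ * t) 0 < x ∧ x < v₁ * t) * GamL v₁ v₂ lam xi x t)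
      = v₁ * gammaKernel lam xi t (x / v₁) - v₂ * gammaKernel lam xi t (x / v₂) := by
  have hv₁ : 0 < v₁ := hv₂.trans hv
  rw [min_eq_right (by positivity), GamL, if_neg (not_lt.mpr hv₂.le)]
  rcases le_or_gt x 0 with hx | hx
  · simp [ind, not_lt.mpr hx, gammaKernel_of_nonpos (div_nonpos_of_nonpos_of_nonneg hx hv₁.le),
      gammaKernel_of_nonpos (div_nonpos_of_nonpos_of_nonneg hx hv₂.le)]
  have hx₁ : 0 < x / v₁ := div_pos hx hv₁
  have hx₂ : 0 < x / v₂ := div_pos hx hv₂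
  rw [mul_gammaKernel_div_of_pos hx₁, mul_gammaKernel_div_of_pos hx₂, ← mul_sub,
    iGamma_sub_iGamma (by positivity) (by positivity) (by positivity)]
  by_cases h : x < v₁ * t
  · have hxt : x / v₁ < t := (div_lt_iff₀ hv₁).mpr (by linarith)
    simp [ind, hx, h, min_eq_left hxt.le]
  · have hxt₁ : t ≤ x / v₁ := (le_div_iff₀ hv₁).mpr (by linarith)
    have hxt₂ : t ≤ x / v₂ := hxt₁.trans (div_le_div_of_nonneg_left hx.le hv₂ hv.le)
    simp [ind, h, min_eq_right hxt₁, min_eq_right hxt₂, iGamma_self]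

lemma integral_mul_gammaKernel_div (hlam : 0 < lam) (hxi : 0 < xi) (ht : 0 ≤ t) {v : ℝ}
    (hv : v ≠ 0) :
    Integrable (fun x => v * gammaKernel lam xi t (x / v))
      ∧ ∫ x, v * gammaKernel lam xi t (x / v)
        = v * |v| * ∫ s in (0:ℝ)..t, s * iGamma ((s + 1 / lam) * xi) ((t + 1 / lam) * xi) := by
  have hint := integrable_indicator_Ioo (b := t)
    ((continuousOn_mul_iGamma_shift hlam hxi ht).mono Icc_subset_Ici_self)
  refine ⟨(hint.comp_div hv).const_mul v, ?_⟩
  rw [integral_const_mul, Measure.integral_comp_div, gammaKernel, integral_indicator_Ioo ht,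
    smul_eq_mul, mul_assoc]

lemma integral_mul_ind_GamL (hcase : (v₂ < 0 ∧ 0 < v₁) ∨ (0 < v₂ ∧ v₂ < v₁)) (hlam : 0 < lam)
    (hxi : 0 < xi) (ht : 0 ≤ t) :
    Integrable (fun x => x * (ind (min (v₂ * t) 0 < x ∧ x < v₁ * t) * GamL v₁ v₂ lam xi x t))
      ∧ ∫ x, x * (ind (min (v₂ * t) 0 < x ∧ x < v₁ * t) * GamL v₁ v₂ lam xi x t)
        = (v₁ ^ 2 - v₂ ^ 2) *
            ∫ s in (0:ℝ)..t, s * iGamma ((s + 1 / lam) * xi) ((t + 1 / lam) * xi) := by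
  rcases hcase with ⟨hv₂, hv₁⟩ | ⟨hv₂, hv⟩
  · obtain ⟨hint₁, h₁⟩ := integral_mul_gammaKernel_div hlam hxi ht hv₁.ne'
    obtain ⟨hint₂, h₂⟩ := integral_mul_gammaKernel_div hlam hxi ht hv₂.ne
    simp_rw [mul_ind_GamL_of_neg hv₂ hv₁ ht]
    refine ⟨hint₁.fun_add hint₂, ?_⟩
    rw [integral_add hint₁ hint₂, h₁, h₂, abs_of_pos hv₁, abs_of_neg hv₂]
    ring
  · obtain ⟨hint₁, h₁⟩ := integral_mul_gammaKernel_div hlam hxi ht (hv₂.trans hv).ne'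
    obtain ⟨hint₂, h₂⟩ := integral_mul_gammaKernel_div hlam hxi ht hv₂.ne'
    simp_rw [mul_ind_GamL_of_pos hv₂ hv hlam hxi ht]
    refine ⟨hint₁.sub' hint₂, ?_⟩
    rw [integral_sub hint₁ hint₂, h₁, h₂, abs_of_pos (hv₂.trans hv), abs_of_pos hv₂]
    ring

end GammaTerm

lemma mul_pTil_eq (v₁ v₂ lam xi : ℝ) (j : ℕ) (t x : ℝ) :
    x * pTil v₁ v₂ lam xi j x t
      = x * (Real.sign (vel v₁ v₂ j) * ind (0 < x / vel v₁ v₂ j ∧ x / vel v₁ v₂ j < t) * xi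
            * exp (-(xi * (x / vel v₁ v₂ j))) / (vel v₁ v₂ j + lam * x))
        + (x * (ind (v₂ * t < x ∧ x < v₁ * t)
            * (lam * exp (-(xi * t)) / ((v₁ - v₂) * (1 + lam * t))))
          + xi * exp (xi / lam) / (v₁ - v₂) *
              (x * (ind (min (v₂ * t) 0 < x ∧ x < v₁ * t) * GamL v₁ v₂ lam xi x t))) := by
  rw [pTil]
  ring

/-- Theorem 5.2, Eq. (54): the mean position of the reset telegraph process. -/
theorem first_moment (v₁ v₂ lam xi : ℝ) (hlam : 0 < lam) (hxi : 0 < xi)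
    (hv : v₂ < v₁) (hv1 : v₁ ≠ 0) (hv2 : v₂ ≠ 0)
    (hcase : (v₂ < 0 ∧ 0 < v₁) ∨ (0 < v₂ ∧ v₂ < v₁)) :
    ∀ j : ℕ, (j = 1 ∨ j = 2) → ∀ t : ℝ, 0 < t →
      vel v₁ v₂ j * t * Real.exp (-(xi * t)) / (1 + lam * t)
        + ∫ x : ℝ, x * pTil v₁ v₂ lam xi j x t
      = Emom v₁ v₂ lam xi j t := by
  intro j hj t ht
  set w := vel v₁ v₂ j
  have hw : w ≠ 0 := by rcases hj with rfl | rfl <;> simpa [w, vel]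
  obtain ⟨hintA, hA⟩ := integral_mul_ballistic (xi := xi) hlam.le ht.le hw
  obtain ⟨hintB, hB⟩ := integral_mul_ind_Ioo (a := v₂ * t) (b := v₁ * t) (by nlinarith)
    (lam * exp (-(xi * t)) / ((v₁ - v₂) * (1 + lam * t)))
  obtain ⟨hintC, hC⟩ := integral_mul_ind_GamL hcase hlam hxi ht.le
  rw [funext (mul_pTil_eq v₁ v₂ lam xi j t),
    integral_add hintA (hintB.fun_add (hintC.const_mul _)),
    integral_add hintB (hintC.const_mul _), integral_const_mul, hA, hB, hC,
    integral_mul_exp_neg_div_one_add_mul hlam hxi ht.le, integral_mul_iGamma_shift hlam hxi ht.le]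
  have hT : (t + 1 / lam) * xi = xi / lam * (1 + lam * t) := by field_simp; ring
  have hsub : v₁ - v₂ ≠ 0 := sub_ne_zero.mpr hv.ne'
  rw [hT, exp_neg (xi / lam)]
  rcases hj with rfl | rfl <;> simp only [Emom, w, vel] <;> norm_num <;> field_simp <;> ring

end TelegraphReset
end
end

section
/- (Theorem 5.2, Eq. (55): second moment.) For every j ∈ {1,2} and every t > 0, (v_jt)²·e^{−ξt}/(1 + λt) + ∫_{ℝ} x²·p̃(x,t|v_j) dx = S_j(t), i.e. the second moment of the position of the reset telegraph process at time t, started at 0 with velocity v_j, equals (1 − e^{−ξt})·[ 2(v₁² + v₁v₂ + v₂²)/(3ξ²) + ((2v_j² − v₁v₂ − v_{j'}²)/(3λ))·(1/ξ − 1/λ) ] − t·e^{−ξt}·[ 2(v₁² + v₁v₂ + v₂²)/(3ξ) + (2v_j² − v₁v₂ − v_{j'}²)/(3λ(1+λt)) ] + (ξe^{ξ/λ}(2v_j² − v₁v₂ − v_{j'}²)/(3λ³))·Γ(0, ξ/λ, (ξ/λ)(1+λt)), where j' = 3 − j. -/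
open MeasureTheory Real Filter Topology Set

noncomputable section

namespace TelegraphReset

/-!
The three terms of `p̃` are treated separately. The first lives between `0` and `v_j t`, and the
substitution `x = v_j s` turns its second moment into `ξ v_j² ∫₀ᵗ s² e^{-ξs} / (1 + λs) ds`.
The second is uniform on `(v₂t, v₁t)`. In the third, the substitution `u = ξ(s + 1/λ)` writes
`Γ_λ^ξ(x,t)` as the integral of `λ e^{-ξ/λ} e^{-ξs} / (1 + λs)` over the times `s ∈ (0, t]` with
`v₂ s < x < v₁ s`, so Fubini over this sector gives
`ξλ (v₁² + v₁v₂ + v₂²)/3 · ∫₀ᵗ s³ e^{-ξs} / (1 + λs) ds`.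
Dividing `s²` and `s³` by `1 + λs` leaves elementary integrals of polynomials times `e^{-ξs}` and
multiples of `∫₀ᵗ e^{-ξs} / (1 + λs) ds = (e^{ξ/λ}/λ) Γ(0, ξ/λ, (ξ/λ)(1 + λt))`.
-/

lemma iGamma_eq_integral {lam xi : ℝ} (hlam : lam ≠ 0) (hxi : xi ≠ 0) (a b : ℝ) :
    iGamma ((a + 1 / lam) * xi) ((b + 1 / lam) * xi)
      = lam * exp (-(xi / lam)) * ∫ s in a..b, exp (-(xi * s)) / (1 + lam * s) := by
  have hsub := intervalIntegral.integral_comp_mul_add (a := a) (b := b)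
    (fun u => u⁻¹ * exp (-u)) hxi (xi / lam)
  rw [show xi * a + xi / lam = (a + 1 / lam) * xi by ring,
    show xi * b + xi / lam = (b + 1 / lam) * xi by ring] at hsub
  rw [iGamma, ← smul_inv_smul₀ hxi (∫ u in _.._, _), ← hsub, smul_eq_mul,
    ← intervalIntegral.integral_const_mul, ← intervalIntegral.integral_const_mul]
  congr 1 with s
  rw [show xi * s + xi / lam = xi / lam * (1 + lam * s) by field_simp; ring,
    show -(xi / lam * (1 + lam * s)) = -(xi / lam) + -(xi * s) by field_simp; ring, exp_add]
  by_cases hs : 1 + lam * s = 0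
  · simp [hs]
  · field_simp

lemma ind_mul_eq_indicator_Ioo (f : ℝ → ℝ) (a b x : ℝ) :
    ind (a < x ∧ x < b) * f x = (Ioo a b).indicator f x := by
  by_cases hx : a < x ∧ x < b <;> simp [ind, hx, indicator, Set.mem_Ioo]

lemma ind_lt_mul_intervalIntegral (f : ℝ → ℝ) (a b : ℝ) :
    ind (a < b) * ∫ x in a..b, f x = ∫ x in Ioc a b, f x := by
  by_cases hab : a < b
  · simp [ind, hab, intervalIntegral.integral_of_le hab.le]
  · simp [ind, hab]

lemma _root_.Real.sign_mul_abs (w : ℝ) : Real.sign w * |w| = w := by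
  rcases lt_trichotomy w 0 with hw | rfl | hw
  · simp [Real.sign_of_neg hw, abs_of_neg hw]
  · simp
  · simp [Real.sign_of_pos hw, abs_of_pos hw]

lemma sign_mul_ind_comp_mul (w t : ℝ) (hw : w ≠ 0) (φ : ℝ → ℝ) (s : ℝ) :
    Real.sign w * ind (0 < w * s / w ∧ w * s / w < t) * φ (w * s)
      = Real.sign w * (Ioo 0 t).indicator (fun s => φ (w * s)) s := by
  rw [mul_div_cancel_left₀ s hw, mul_assoc, ind_mul_eq_indicator_Ioo (fun s => φ (w * s))]

lemma integral_sign_mul_ind (w t : ℝ) (hw : w ≠ 0) (φ : ℝ → ℝ) :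
    ∫ x, Real.sign w * ind (0 < x / w ∧ x / w < t) * φ x
      = w * ∫ s in Ioo 0 t, φ (w * s) := by
  have hscale := Measure.integral_comp_mul_left
    (fun x => Real.sign w * ind (0 < x / w ∧ x / w < t) * φ x) w
  rw [abs_inv, smul_eq_mul, eq_inv_mul_iff_mul_eq₀ (abs_ne_zero.mpr hw)] at hscale
  simp only [sign_mul_ind_comp_mul w t hw, integral_const_mul,
    integral_indicator measurableSet_Ioo] at hscale
  rw [← hscale, ← mul_assoc, mul_comm |w|, Real.sign_mul_abs]

lemma integrable_sign_mul_ind (w t : ℝ) (hw : w ≠ 0) {φ : ℝ → ℝ}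
    (hφ : IntegrableOn (fun s => φ (w * s)) (Ioo 0 t)) :
    Integrable (fun x => Real.sign w * ind (0 < x / w ∧ x / w < t) * φ x) := by
  rw [← integrable_comp_mul_left_iff _ hw]
  simp only [sign_mul_ind_comp_mul w t hw]
  exact (hφ.integrable_indicator measurableSet_Ioo).const_mul _

def sector (v₁ v₂ t : ℝ) : Set (ℝ × ℝ) :=
  {p | 0 < p.2 ∧ p.2 ≤ t ∧ v₂ * p.2 < p.1 ∧ p.1 < v₁ * p.2}

section Sector

variable (v₁ v₂ t : ℝ)

lemma measurableSet_sector : MeasurableSet (sector v₁ v₂ t) :=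
  (measurableSet_lt measurable_const measurable_snd).inter <|
    (measurableSet_le measurable_snd measurable_const).inter <|
      (measurableSet_lt (measurable_snd.const_mul v₂) measurable_fst).inter
        (measurableSet_lt measurable_fst (measurable_snd.const_mul v₁))

lemma sector_subset_prod : sector v₁ v₂ t ⊆ Icc (-(|v₂| * t)) (|v₁| * t) ×ˢ Icc 0 t := by
  rintro ⟨x, s⟩ ⟨hs, hst, hlow, hup⟩
  refine ⟨⟨?_, ?_⟩, hs.le, hst⟩
  · nlinarith [neg_abs_le v₂, abs_nonneg v₂]
  · nlinarith [le_abs_self v₁, abs_nonneg v₁]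

variable {v₁ v₂ t}

lemma integrableOn_sector {φ f : ℝ → ℝ} (hφ : Continuous φ) (hf : ContinuousOn f (Icc 0 t)) :
    IntegrableOn (fun p : ℝ × ℝ => φ p.1 * f p.2) (sector v₁ v₂ t) := by
  refine IntegrableOn.mono_set ?_ (sector_subset_prod v₁ v₂ t)
  refine ContinuousOn.integrableOn_compact (isCompact_Icc.prod isCompact_Icc) ?_
  exact (hφ.comp continuous_fst).continuousOn.mul
    (hf.comp continuous_snd.continuousOn fun p hp => hp.2)

lemma indicator_sector_apply (φ f : ℝ → ℝ) (x s : ℝ) :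
    (sector v₁ v₂ t).indicator (fun p => φ p.1 * f p.2) (x, s)
      = φ x * (Prod.mk x ⁻¹' sector v₁ v₂ t).indicator f s := by
  by_cases h : (x, s) ∈ sector v₁ v₂ t <;> simp [indicator, h]

lemma indicator_sector_apply_eq_indicator_Ioc (φ f : ℝ → ℝ) (x s : ℝ) :
    (sector v₁ v₂ t).indicator (fun p => φ p.1 * f p.2) (x, s)
      = (Ioc 0 t).indicator (fun s => (Ioo (v₂ * s) (v₁ * s)).indicator φ x * f s) s := by
  by_cases hs : s ∈ Ioc 0 t
  · simp [indicator, sector, hs.1, hs.2]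
  · simp only [indicator_of_notMem hs]
    exact indicator_of_notMem (fun h => hs ⟨h.1, h.2.1⟩) _

lemma integral_mul_setIntegral_slice {φ f : ℝ → ℝ} (hφ : Continuous φ)
    (hf : ContinuousOn f (Icc 0 t)) :
    ∫ x, φ x * ∫ s in Prod.mk x ⁻¹' sector v₁ v₂ t, f s
      = ∫ s in Ioc 0 t, (∫ x in Ioo (v₂ * s) (v₁ * s), φ x) * f s := by
  have hF := (integrableOn_sector (v₁ := v₁) (v₂ := v₂) hφ hf).integrable_indicator
    (measurableSet_sector v₁ v₂ t)
  rw [Measure.volume_eq_prod] at hF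
  calc ∫ x, φ x * ∫ s in Prod.mk x ⁻¹' sector v₁ v₂ t, f s
      = ∫ x, ∫ s, (sector v₁ v₂ t).indicator (fun p => φ p.1 * f p.2) (x, s) := by
        congr 1 with x
        rw [← integral_indicator (measurable_prodMk_left (measurableSet_sector v₁ v₂ t)),
          ← integral_const_mul]
        simp only [indicator_sector_apply]
    _ = ∫ s, ∫ x, (sector v₁ v₂ t).indicator (fun p => φ p.1 * f p.2) (x, s) :=
        integral_integral_swap hF
    _ = ∫ s in Ioc 0 t, (∫ x in Ioo (v₂ * s) (v₁ * s), φ x) * f s := by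
        rw [← integral_indicator measurableSet_Ioc]
        congr 1 with s
        simp only [indicator_sector_apply_eq_indicator_Ioc]
        by_cases hs : s ∈ Ioc 0 t
        · simp [indicator_of_mem hs, integral_mul_const, integral_indicator measurableSet_Ioo]
        · simp [indicator_of_notMem hs]

lemma integrable_mul_setIntegral_slice {φ f : ℝ → ℝ} (hφ : Continuous φ)
    (hf : ContinuousOn f (Icc 0 t)) :
    Integrable (fun x => φ x * ∫ s in Prod.mk x ⁻¹' sector v₁ v₂ t, f s) := by
  have hF := (integrableOn_sector (v₁ := v₁) (v₂ := v₂) hφ hf).integrable_indicator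
    (measurableSet_sector v₁ v₂ t)
  rw [Measure.volume_eq_prod] at hF
  refine hF.integral_prod_left.congr (ae_of_all _ fun x => ?_)
  dsimp only
  rw [← integral_indicator (measurable_prodMk_left (measurableSet_sector v₁ v₂ t)),
    ← integral_const_mul]
  simp only [indicator_sector_apply]

end Sector

section Slices

variable {v₁ v₂ t : ℝ}

lemma slice_sector_of_neg (hv₂ : v₂ < 0) (hv₁ : 0 < v₁) (x : ℝ) :
    Prod.mk x ⁻¹' sector v₁ v₂ t = Ioc (max (x / v₁) (x / v₂)) t := by
  ext s
  simp only [mem_preimage, sector, mem_ofPred_eq, mem_Ioc, max_lt_iff, div_lt_iff₀ hv₁,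
    div_lt_iff_of_neg hv₂]
  constructor
  · rintro ⟨-, hst, hlow, hup⟩
    exact ⟨⟨by linarith, by linarith⟩, hst⟩
  · rintro ⟨⟨hup, hlow⟩, hst⟩
    exact ⟨by nlinarith, hst, by linarith, by linarith⟩

lemma slice_sector_ae_eq_of_pos (hv₂ : 0 < v₂) (hv : v₂ < v₁) (x : ℝ) :
    Prod.mk x ⁻¹' sector v₁ v₂ t =ᵐ[volume] Ioc (x / v₁) (min (x / v₂) t) := by
  have hslice : Prod.mk x ⁻¹' sector v₁ v₂ t = Ioc (x / v₁) t ∩ Iio (x / v₂) := by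
    ext s
    simp only [mem_preimage, sector, mem_ofPred_eq, mem_inter_iff, mem_Ioc, mem_Iio,
      div_lt_iff₀ (hv₂.trans hv), lt_div_iff₀ hv₂]
    constructor
    · rintro ⟨-, hst, hlow, hup⟩
      exact ⟨⟨by linarith, hst⟩, by linarith⟩
    · rintro ⟨⟨hup, hst⟩, hlow⟩
      exact ⟨by nlinarith, hst, by linarith, by linarith⟩
  rw [hslice, min_comm, ← Ioc_inter_Iic]
  exact (ae_eq_refl _).inter Iio_ae_eq_Iic

variable {lam xi : ℝ}

lemma ind_mul_GamL (hlam : lam ≠ 0) (hxi : xi ≠ 0)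
    (hcase : (v₂ < 0 ∧ 0 < v₁) ∨ (0 < v₂ ∧ v₂ < v₁)) (ht : 0 ≤ t) (x : ℝ) :
    ind (min (v₂ * t) 0 < x ∧ x < v₁ * t) * GamL v₁ v₂ lam xi x t
      = lam * exp (-(xi / lam))
          * ∫ s in Prod.mk x ⁻¹' sector v₁ v₂ t, exp (-(xi * s)) / (1 + lam * s) := by
  rcases hcase with ⟨hv₂, hv₁⟩ | ⟨hv₂, hv⟩
  · have hind : (min (v₂ * t) 0 < x ∧ x < v₁ * t) ↔ max (x / v₁) (x / v₂) < t := by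
      rw [min_eq_left (mul_nonpos_of_nonpos_of_nonneg hv₂.le ht), max_lt_iff,
        div_lt_iff₀ hv₁, div_lt_iff_of_neg hv₂, mul_comm t, mul_comm t, and_comm]
    rw [GamL, if_pos hv₂, iGamma_eq_integral hlam hxi, slice_sector_of_neg hv₂ hv₁, hind,
      ← ind_lt_mul_intervalIntegral]
    ring
  · have hind : (min (v₂ * t) 0 < x ∧ x < v₁ * t) ↔ x / v₁ < min (x / v₂) t := by
      rw [min_eq_right (mul_nonneg hv₂.le ht), lt_min_iff, div_lt_div_iff₀ (hv₂.trans hv) hv₂,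
        div_lt_iff₀ (hv₂.trans hv), mul_comm t]
      exact and_congr_left' ⟨fun hx => by nlinarith, fun hx => by nlinarith⟩
    rw [GamL, if_neg hv₂.not_gt, iGamma_eq_integral hlam hxi,
      setIntegral_congr_set (slice_sector_ae_eq_of_pos hv₂ hv x), hind,
      ← ind_lt_mul_intervalIntegral]
    ring

end Slices

section Calculus

variable {lam xi : ℝ}

lemma integral_quadratic_mul_exp (hxi : xi ≠ 0) (a b c t : ℝ) :
    ∫ s in (0 : ℝ)..t, (a * s ^ 2 + b * s + c) * exp (-(xi * s))
      = (c + b / xi + 2 * a / xi ^ 2) / xi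
        - (a * t ^ 2 + (b + 2 * a / xi) * t + (c + b / xi + 2 * a / xi ^ 2)) / xi
          * exp (-(xi * t)) := by
  have hderiv : ∀ s ∈ uIcc (0 : ℝ) t, HasDerivAt
      (fun s => -((a * s ^ 2 + (b + 2 * a / xi) * s + (c + b / xi + 2 * a / xi ^ 2)) / xi)
        * exp (-(xi * s)))
      ((a * s ^ 2 + b * s + c) * exp (-(xi * s))) s := by
    intro s _
    have hexp : HasDerivAt (fun s => exp (-(xi * s))) (-xi * exp (-(xi * s))) s := by
      simpa [mul_comm] using ((hasDerivAt_id s).const_mul xi).neg.exp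
    have hpoly : HasDerivAt
        (fun s => -((a * s ^ 2 + (b + 2 * a / xi) * s + (c + b / xi + 2 * a / xi ^ 2)) / xi))
        (-((2 * a * s + (b + 2 * a / xi)) / xi)) s := by
      refine (((((hasDerivAt_pow 2 s).const_mul a).add
        ((hasDerivAt_id' s).const_mul (b + 2 * a / xi))).add_const
          (c + b / xi + 2 * a / xi ^ 2)).div_const xi).fun_neg.congr_deriv ?_
      ring
    refine (hpoly.mul hexp).congr_deriv ?_
    field_simp
    ring
  rw [intervalIntegral.integral_eq_sub_of_hasDerivAt hderiv
    (by apply Continuous.intervalIntegrable; fun_prop)]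
  simp only [mul_zero, neg_zero, exp_zero]
  ring

lemma integral_exp_div_one_add_mul (hlam : lam ≠ 0) (hxi : xi ≠ 0) (t : ℝ) :
    ∫ s in (0 : ℝ)..t, exp (-(xi * s)) / (1 + lam * s)
      = exp (xi / lam) / lam * iGamma (xi / lam) (xi / lam * (1 + lam * t)) := by
  have h := iGamma_eq_integral hlam hxi 0 t
  rw [show (0 + 1 / lam) * xi = xi / lam by ring,
    show (t + 1 / lam) * xi = xi / lam * (1 + lam * t) by field_simp; ring] at h
  rw [h, ← mul_assoc, ← mul_assoc,
    show exp (xi / lam) / lam * lam * exp (-(xi / lam)) = 1 by rw [exp_neg]; field_simp, one_mul]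

lemma integral_mul_exp_div_of_eq_mul_add (hlam : 0 < lam) {t : ℝ} (ht : 0 ≤ t) (a b c r : ℝ)
    {p : ℝ → ℝ}
    (hp : ∀ s, p s = (a * s ^ 2 + b * s + c) * (1 + lam * s) + r) :
    ∫ s in (0 : ℝ)..t, p s * (exp (-(xi * s)) / (1 + lam * s))
      = (∫ s in (0 : ℝ)..t, (a * s ^ 2 + b * s + c) * exp (-(xi * s)))
        + r * ∫ s in (0 : ℝ)..t, exp (-(xi * s)) / (1 + lam * s) := by
  have hpos : ∀ s ∈ uIcc 0 t, 0 < 1 + lam * s := fun s hs => by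
    rw [uIcc_of_le ht] at hs
    nlinarith [hs.1]
  have hh : IntervalIntegrable (fun s => exp (-(xi * s)) / (1 + lam * s)) volume 0 t :=
    (ContinuousOn.div (by fun_prop) (by fun_prop) fun s hs => (hpos s hs).ne').intervalIntegrable
  rw [← intervalIntegral.integral_const_mul, ← intervalIntegral.integral_add
    (by apply Continuous.intervalIntegrable; fun_prop) (hh.const_mul r)]
  refine intervalIntegral.integral_congr fun s hs => ?_
  rw [hp, add_mul, mul_assoc, mul_div_assoc', mul_div_cancel_left₀ _ (hpos s hs).ne']

end Calculus

section Moments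

variable {v₁ v₂ lam xi t : ℝ}

lemma continuousOn_exp_div_one_add_mul (hlam : 0 ≤ lam) :
    ContinuousOn (fun s => exp (-(xi * s)) / (1 + lam * s)) (Ici 0) :=
  ContinuousOn.div (by fun_prop) (by fun_prop) fun s hs => by
    have : 0 ≤ s := hs
    positivity

lemma sq_mul_exp_div_comp_mul {w : ℝ} (hw : w ≠ 0) (s : ℝ) :
    w * ((w * s) ^ 2 * xi * exp (-(xi * (w * s / w))) / (w + lam * (w * s)))
      = w ^ 2 * xi * (s ^ 2 * (exp (-(xi * s)) / (1 + lam * s))) := by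
  rw [mul_div_cancel_left₀ s hw, show w + lam * (w * s) = w * (1 + lam * s) by ring]
  by_cases hs : 1 + lam * s = 0
  · simp [hs]
  · field_simp

lemma integrable_sign_mul_ind_sq_mul_exp_div (hlam : 0 ≤ lam) {w : ℝ} (hw : w ≠ 0) :
    Integrable fun x => Real.sign w * ind (0 < x / w ∧ x / w < t)
      * (x ^ 2 * xi * exp (-(xi * (x / w))) / (w + lam * x)) := by
  refine integrable_sign_mul_ind w t hw ?_
  have hcont : ContinuousOn (fun s => w ^ 2 * xi * (s ^ 2 * (exp (-(xi * s)) / (1 + lam * s))))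
      (Icc 0 t) :=
    continuousOn_const.mul (((continuous_pow 2).continuousOn).mul
      ((continuousOn_exp_div_one_add_mul hlam).mono fun s hs => hs.1))
  refine ((hcont.div_const w).congr fun s _ => ?_).integrableOn_Icc.mono_set Ioo_subset_Icc_self
  rw [← sq_mul_exp_div_comp_mul hw]
  exact (mul_div_cancel_left₀ _ hw).symm

lemma integral_sign_mul_ind_sq_mul_exp_div {w : ℝ} (hw : w ≠ 0) (ht : 0 ≤ t) :
    ∫ x, Real.sign w * ind (0 < x / w ∧ x / w < t)
        * (x ^ 2 * xi * exp (-(xi * (x / w))) / (w + lam * x))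
      = w ^ 2 * xi * ∫ s in (0 : ℝ)..t, s ^ 2 * (exp (-(xi * s)) / (1 + lam * s)) := by
  rw [integral_sign_mul_ind w t hw, ← integral_const_mul, ← intervalIntegral.integral_const_mul,
    intervalIntegral.integral_of_le ht, integral_Ioc_eq_integral_Ioo]
  simp only [sq_mul_exp_div_comp_mul hw]

lemma integral_sq_mul_ind_Ioo (a b C : ℝ) (hab : a ≤ b) :
    ∫ x, ind (a < x ∧ x < b) * (x ^ 2 * C) = C * ((b ^ 3 - a ^ 3) / 3) := by
  simp only [ind_mul_eq_indicator_Ioo (fun x => x ^ 2 * C), integral_indicator measurableSet_Ioo,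
    ← integral_Ioc_eq_integral_Ioo, ← intervalIntegral.integral_of_le hab,
    intervalIntegral.integral_mul_const, integral_pow]
  ring

lemma integrable_sq_mul_ind_Ioo (a b C : ℝ) :
    Integrable fun x => ind (a < x ∧ x < b) * (x ^ 2 * C) := by
  simp only [ind_mul_eq_indicator_Ioo (fun x => x ^ 2 * C)]
  exact ((continuous_pow 2).mul continuous_const).continuousOn.integrableOn_Icc.mono_set
    Ioo_subset_Icc_self |>.integrable_indicator measurableSet_Ioo

lemma integral_sq_mul_setIntegral_slice (hlam : 0 ≤ lam) (hv : v₂ ≤ v₁) (ht : 0 ≤ t) :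
    ∫ x, x ^ 2 * ∫ s in Prod.mk x ⁻¹' sector v₁ v₂ t, exp (-(xi * s)) / (1 + lam * s)
      = (v₁ ^ 3 - v₂ ^ 3) / 3 * ∫ s in (0 : ℝ)..t, s ^ 3 * (exp (-(xi * s)) / (1 + lam * s)) := by
  rw [integral_mul_setIntegral_slice (continuous_pow 2)
      ((continuousOn_exp_div_one_add_mul hlam).mono fun s hs => hs.1),
    ← intervalIntegral.integral_const_mul, intervalIntegral.integral_of_le ht]
  refine setIntegral_congr_fun measurableSet_Ioc fun s hs => ?_
  have hvs : v₂ * s ≤ v₁ * s := mul_le_mul_of_nonneg_right hv hs.1.le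
  rw [← integral_Ioc_eq_integral_Ioo, ← intervalIntegral.integral_of_le hvs, integral_pow]
  ring

end Moments

section Velocities

variable {v₁ v₂ : ℝ} {j : ℕ}

lemma vel_ne_zero (hcase : (v₂ < 0 ∧ 0 < v₁) ∨ (0 < v₂ ∧ v₂ < v₁)) (hj : j = 1 ∨ j = 2) :
    vel v₁ v₂ j ≠ 0 := by
  rcases hj with rfl | rfl <;> simp only [vel] <;> norm_num <;>
    rcases hcase with h | h <;> linarith [h.1, h.2]

lemma vel_three_sub_sq (hj : j = 1 ∨ j = 2) :
    vel v₁ v₂ (3 - j) ^ 2 = v₁ ^ 2 + v₂ ^ 2 - vel v₁ v₂ j ^ 2 := by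
  rcases hj with rfl | rfl <;> simp only [vel] <;> norm_num

end Velocities

lemma integral_sq_mul_pTil {v₁ v₂ lam xi t : ℝ} {j : ℕ} (hlam : 0 < lam) (hxi : xi ≠ 0)
    (hcase : (v₂ < 0 ∧ 0 < v₁) ∨ (0 < v₂ ∧ v₂ < v₁)) (hw : vel v₁ v₂ j ≠ 0) (ht : 0 ≤ t) :
    ∫ x, x ^ 2 * pTil v₁ v₂ lam xi j x t
      = vel v₁ v₂ j ^ 2 * xi * (∫ s in (0 : ℝ)..t, s ^ 2 * (exp (-(xi * s)) / (1 + lam * s)))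
        + lam * exp (-(xi * t)) / ((v₁ - v₂) * (1 + lam * t)) * (((v₁ * t) ^ 3 - (v₂ * t) ^ 3) / 3)
        + xi * lam * (v₁ ^ 2 + v₁ * v₂ + v₂ ^ 2) / 3
          * ∫ s in (0 : ℝ)..t, s ^ 3 * (exp (-(xi * s)) / (1 + lam * s)) := by
  have hv : v₂ < v₁ := by rcases hcase with h | h <;> linarith [h.1, h.2]
  set w := vel v₁ v₂ j
  have hsplit : ∀ x, x ^ 2 * pTil v₁ v₂ lam xi j x t
      = (Real.sign w * ind (0 < x / w ∧ x / w < t)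
            * (x ^ 2 * xi * exp (-(xi * (x / w))) / (w + lam * x))
          + ind (v₂ * t < x ∧ x < v₁ * t)
            * (x ^ 2 * (lam * exp (-(xi * t)) / ((v₁ - v₂) * (1 + lam * t)))))
        + xi * lam / (v₁ - v₂)
          * (x ^ 2 * ∫ s in Prod.mk x ⁻¹' sector v₁ v₂ t, exp (-(xi * s)) / (1 + lam * s)) := by
    intro x
    rw [pTil]
    have hexp : exp (xi / lam) * exp (-(xi / lam)) = 1 := by
      rw [← exp_add, add_neg_cancel, exp_zero]
    linear_combination x ^ 2 * xi * exp (xi / lam) / (v₁ - v₂)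
      * ind_mul_GamL hlam.ne' hxi hcase ht x
      + x ^ 2 * xi * lam / (v₁ - v₂)
        * (∫ s in Prod.mk x ⁻¹' sector v₁ v₂ t, exp (-(xi * s)) / (1 + lam * s)) * hexp
  simp only [hsplit]
  rw [integral_add ((integrable_sign_mul_ind_sq_mul_exp_div hlam.le hw).fun_add
      (integrable_sq_mul_ind_Ioo _ _ _))
      ((integrable_mul_setIntegral_slice (continuous_pow 2)
        ((continuousOn_exp_div_one_add_mul hlam.le).mono fun s hs => hs.1)).const_mul _),
    integral_add (integrable_sign_mul_ind_sq_mul_exp_div hlam.le hw)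
      (integrable_sq_mul_ind_Ioo _ _ _),
    integral_sign_mul_ind_sq_mul_exp_div hw ht,
    integral_sq_mul_ind_Ioo _ _ _ (by nlinarith), integral_const_mul,
    integral_sq_mul_setIntegral_slice hlam.le hv.le ht]
  generalize ∫ s in (0 : ℝ)..t, s ^ 2 * (exp (-(xi * s)) / (1 + lam * s)) = I₂
  generalize ∫ s in (0 : ℝ)..t, s ^ 3 * (exp (-(xi * s)) / (1 + lam * s)) = I₃
  have : v₁ - v₂ ≠ 0 := sub_ne_zero.mpr hv.ne'
  field_simp
  ring

theorem second_moment_general (v₁ v₂ lam xi : ℝ) (hlam : 0 < lam) (hxi : 0 < xi)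
    (hcase : (v₂ < 0 ∧ 0 < v₁) ∨ (0 < v₂ ∧ v₂ < v₁)) :
    ∀ j : ℕ, (j = 1 ∨ j = 2) → ∀ t : ℝ, 0 < t →
      (vel v₁ v₂ j * t) ^ 2 * Real.exp (-(xi * t)) / (1 + lam * t)
        + ∫ x : ℝ, x ^ 2 * pTil v₁ v₂ lam xi j x t
      = Smom v₁ v₂ lam xi j t := by
  intro j hj t ht
  have hv : v₂ < v₁ := by rcases hcase with h | h <;> linarith [h.1, h.2]
  have hdiv₂ (s : ℝ) :
      s ^ 2 = (0 * s ^ 2 + 1 / lam * s + -(1 / lam ^ 2)) * (1 + lam * s) + 1 / lam ^ 2 := by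
    field_simp
    ring
  have hdiv₃ (s : ℝ) :
      s ^ 3 = (1 / lam * s ^ 2 + -(1 / lam ^ 2) * s + 1 / lam ^ 3) * (1 + lam * s)
        + -(1 / lam ^ 3) := by
    field_simp
    ring
  rw [integral_sq_mul_pTil hlam hxi.ne' hcase (vel_ne_zero hcase hj) ht.le,
    integral_mul_exp_div_of_eq_mul_add hlam ht.le _ _ _ _ hdiv₂,
    integral_mul_exp_div_of_eq_mul_add hlam ht.le _ _ _ _ hdiv₃,
    integral_quadratic_mul_exp hxi.ne', integral_quadratic_mul_exp hxi.ne',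
    integral_exp_div_one_add_mul hlam.ne' hxi.ne', Smom, vel_three_sub_sq hj]
  have : v₁ - v₂ ≠ 0 := sub_ne_zero.mpr hv.ne'
  field_simp
  ring

/-- Theorem 5.2, Eq. (55): the second moment of the position of the reset
telegraph process. -/
theorem second_moment (v₁ v₂ lam xi : ℝ) (hlam : 0 < lam) (hxi : 0 < xi)
    (hv : v₂ < v₁) (hv1 : v₁ ≠ 0) (hv2 : v₂ ≠ 0)
    (hcase : (v₂ < 0 ∧ 0 < v₁) ∨ (0 < v₂ ∧ v₂ < v₁)) :
    ∀ j : ℕ, (j = 1 ∨ j = 2) → ∀ t : ℝ, 0 < t →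
      (vel v₁ v₂ j * t) ^ 2 * Real.exp (-(xi * t)) / (1 + lam * t)
        + ∫ x : ℝ, x ^ 2 * pTil v₁ v₂ lam xi j x t
      = Smom v₁ v₂ lam xi j t :=
  second_moment_general v₁ v₂ lam xi hlam hxi hcase

end TelegraphReset
end
end

section
/- (Corollary 5.5: large reset rate limit of the mean-square distance.) Fix t > 0, λ > 0 and j ∈ {1,2}, and regard E_j(t) and S_j(t) as functions of the reset rate ξ > 0. Then lim_{ξ→+∞} ( S_j(t) + m2_j(t) − 2·E_j(t)·m1_j(t) ) = m2_j(t) = t²·(3v_j² + λt(v₁² + v₁v₂ + v₂²))/(3(1+λt)); equivalently, lim_{ξ→+∞} E_j(t) = 0 and lim_{ξ→+∞} S_j(t) = 0, so that the mean-square distance Δ_j(ξ,t) between the reset and reset-free processes tends to the second moment of the reset-free process. -/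
open MeasureTheory Real Filter Topology Set

noncomputable section

namespace TelegraphReset

/-!
The moments `E_j` and `S_j` are combinations of `e^{-ξt}`, negative powers of `ξ`, constants, and
`K(ξ) = ξ e^{ξ/λ} Γ(0, ξ/λ, (ξ/λ)(1+λt))`. Integration by parts gives
`a e^a Γ(0, a, ca) = 1 - e^{(1-c)a}/c - a e^a ∫_a^{ca} u⁻² e^{-u} du`, and the last term is at most
`1/a`, so `K(ξ) → λ`. The surviving constants then cancel against `λ` times the coefficient of `K`.
-/

theorem integral_exp_neg (a b : ℝ) : ∫ x in a..b, exp (-x) = exp (-a) - exp (-b) := by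
  rw [intervalIntegral.integral_comp_neg (fun x => exp x), integral_exp]

theorem iGamma_eq_sub_integral {a b : ℝ} (ha : 0 < a) (hb : 0 < b) :
    iGamma a b = exp (-a) / a - exp (-b) / b - ∫ x in a..b, (x ^ 2)⁻¹ * exp (-x) := by
  have hpos : ∀ x ∈ uIcc a b, x ≠ 0 := fun x hx =>
    (lt_of_lt_of_le (lt_min ha hb) hx.1).ne'
  have hibp := intervalIntegral.integral_mul_deriv_eq_deriv_mul
    (u := fun x => x⁻¹) (v := fun x => -exp (-x))
    (fun x hx => hasDerivAt_inv (hpos x hx))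
    (fun x _ => by simpa using (hasDerivAt_neg x).exp.fun_neg)
    (ContinuousOn.intervalIntegrable
      ((continuousOn_pow 2).inv₀ fun x hx => pow_ne_zero 2 (hpos x hx)).neg)
    ((by fun_prop : Continuous fun x => exp (-x)).intervalIntegrable a b)
  simp only [neg_mul_neg] at hibp
  rw [iGamma, hibp]
  ring

theorem integral_inv_sq_mul_exp_neg_le {a b : ℝ} (ha : 0 < a) (hab : a ≤ b) :
    ∫ x in a..b, (x ^ 2)⁻¹ * exp (-x) ≤ (a ^ 2)⁻¹ * exp (-a) := by
  calc ∫ x in a..b, (x ^ 2)⁻¹ * exp (-x)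
      ≤ ∫ x in a..b, (a ^ 2)⁻¹ * exp (-x) := by
        refine intervalIntegral.integral_mono_on hab ?_ ?_ fun x hx => ?_
        · refine ContinuousOn.intervalIntegrable (ContinuousOn.mul ?_ (by fun_prop))
          exact (continuousOn_pow 2).inv₀ fun x hx =>
            pow_ne_zero 2 (lt_of_lt_of_le ha (by simpa [hab] using hx.1)).ne'
        · exact (by fun_prop : Continuous fun x : ℝ => (a ^ 2)⁻¹ * exp (-x)).intervalIntegrable a b
        · gcongr
          exact hx.1
    _ = (a ^ 2)⁻¹ * (exp (-a) - exp (-b)) := by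
        rw [intervalIntegral.integral_const_mul, integral_exp_neg]
    _ ≤ (a ^ 2)⁻¹ * exp (-a) := by
        gcongr
        linarith [exp_pos (-b)]

theorem integral_inv_sq_mul_exp_neg_nonneg {a b : ℝ} (ha : 0 < a) (hab : a ≤ b) :
    0 ≤ ∫ x in a..b, (x ^ 2)⁻¹ * exp (-x) :=
  intervalIntegral.integral_nonneg hab fun x hx => by
    have : 0 < x := ha.trans_le hx.1
    positivity

theorem tendsto_mul_exp_mul_iGamma {c : ℝ} (hc : 1 < c) :
    Tendsto (fun a => a * exp a * iGamma a (a * c)) atTop (𝓝 1) := by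
  have hremainder : Tendsto (fun a => a * exp a * ∫ x in a..(a * c), (x ^ 2)⁻¹ * exp (-x))
      atTop (𝓝 0) := by
    refine tendsto_of_tendsto_of_tendsto_of_le_of_le' tendsto_const_nhds tendsto_inv_atTop_zero
      ?_ ?_ <;> filter_upwards [eventually_gt_atTop 0] with a ha
    · have := integral_inv_sq_mul_exp_neg_nonneg ha (le_mul_of_one_le_right ha.le hc.le)
      positivity
    · calc a * exp a * ∫ x in a..(a * c), (x ^ 2)⁻¹ * exp (-x)
          ≤ a * exp a * ((a ^ 2)⁻¹ * exp (-a)) := by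
            gcongr
            exact integral_inv_sq_mul_exp_neg_le ha (le_mul_of_one_le_right ha.le hc.le)
        _ = a⁻¹ := by
            rw [exp_neg]
            field_simp
  have hexp : Tendsto (fun a => exp (a * (1 - c)) / c) atTop (𝓝 0) := by
    simpa using ((tendsto_exp_atBot.comp
      (tendsto_id.atTop_mul_const_of_neg (sub_neg.2 hc))).div_const c)
  have hlim := ((tendsto_const_nhds (x := (1 : ℝ))).sub hexp).sub hremainder
  rw [sub_zero, sub_zero] at hlim
  refine hlim.congr' ?_
  filter_upwards [eventually_gt_atTop 0] with a ha
  rw [iGamma_eq_sub_integral ha (by positivity)]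
  have : exp (a * (1 - c)) = exp a * exp (-(a * c)) := by rw [← exp_add]; ring_nf
  rw [this, exp_neg a]
  field_simp

theorem tendsto_mul_exp_div_mul_iGamma {lam t : ℝ} (hlam : 0 < lam) (ht : 0 < t) :
    Tendsto (fun xi => xi * exp (xi / lam) * iGamma (xi / lam) (xi / lam * (1 + lam * t)))
      atTop (𝓝 lam) := by
  have h := ((tendsto_mul_exp_mul_iGamma (c := 1 + lam * t) (by nlinarith)).comp
    (tendsto_id.atTop_div_const hlam)).const_mul lam
  rw [mul_one] at h
  refine h.congr fun xi => ?_
  simp only [Function.comp_apply, id]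
  field_simp

theorem tendsto_exp_neg_mul_atTop {t : ℝ} (ht : 0 < t) :
    Tendsto (fun xi => exp (-(xi * t))) atTop (𝓝 0) :=
  tendsto_exp_neg_atTop_nhds_zero.comp (tendsto_id.atTop_mul_const ht)

section Moments

variable {v₁ v₂ lam t : ℝ}

theorem tendsto_Emom_atTop (hlam : 0 < lam) (ht : 0 < t) (j : ℕ) :
    Tendsto (fun xi => Emom v₁ v₂ lam xi j t) atTop (𝓝 0) := by
  set D := vel v₁ v₂ j - vel v₁ v₂ (3 - j)
  have hexp := tendsto_exp_neg_mul_atTop ht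
  have h := (((tendsto_const_nhds (x := (1 : ℝ))).sub hexp).mul
      ((tendsto_inv_atTop_zero.const_mul ((v₁ + v₂) / 2)).add
        (tendsto_const_nhds (x := D / (2 * lam))))).sub
      ((tendsto_mul_exp_div_mul_iGamma hlam ht).const_mul (D / (2 * lam ^ 2))) |>.add
      (hexp.const_mul (t * D / (2 * (1 + lam * t))))
  convert h using 2
  · simp only [Emom]
    ring
  · field_simp
    ring

theorem tendsto_Smom_atTop (hlam : 0 < lam) (ht : 0 < t) (j : ℕ) :
    Tendsto (fun xi => Smom v₁ v₂ lam xi j t) atTop (𝓝 0) := by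
  set C := 2 * (v₁ ^ 2 + v₁ * v₂ + v₂ ^ 2)
  set D := 2 * vel v₁ v₂ j ^ 2 - v₁ * v₂ - vel v₁ v₂ (3 - j) ^ 2
  have hexp := tendsto_exp_neg_mul_atTop ht
  have hinv : Tendsto (fun xi : ℝ => xi⁻¹) atTop (𝓝 0) := tendsto_inv_atTop_zero
  have h := (((tendsto_const_nhds (x := (1 : ℝ))).sub hexp).mul
      (((hinv.pow 2).const_mul (C / 3)).add
        ((hinv.sub (tendsto_const_nhds (x := 1 / lam))).const_mul (D / (3 * lam))))).sub
      ((hexp.const_mul t).mul ((hinv.const_mul (C / 3)).add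
        (tendsto_const_nhds (x := D / (3 * lam * (1 + lam * t)))))) |>.add
      ((tendsto_mul_exp_div_mul_iGamma hlam ht).const_mul (D / (3 * lam ^ 3)))
  convert h using 2
  · simp only [Smom]
    ring
  · field_simp
    ring

end Moments

theorem large_reset_rate_general (v₁ v₂ lam t : ℝ) (hlam : 0 < lam) (ht : 0 < t) :
    ∀ j : ℕ, (j = 1 ∨ j = 2) →
      Tendsto (fun xi => Smom v₁ v₂ lam xi j t + m2 v₁ v₂ lam j t
          - 2 * Emom v₁ v₂ lam xi j t * m1 v₁ v₂ lam j t) atTop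
        (𝓝 (m2 v₁ v₂ lam j t))
      ∧ m2 v₁ v₂ lam j t
          = t ^ 2 * (3 * vel v₁ v₂ j ^ 2 + lam * t * (v₁ ^ 2 + v₁ * v₂ + v₂ ^ 2)) /
              (3 * (1 + lam * t))
      ∧ Tendsto (fun xi => Emom v₁ v₂ lam xi j t) atTop (𝓝 0)
      ∧ Tendsto (fun xi => Smom v₁ v₂ lam xi j t) atTop (𝓝 0) := by
  intro j _
  have hE := tendsto_Emom_atTop (v₁ := v₁) (v₂ := v₂) hlam ht j
  have hS := tendsto_Smom_atTop (v₁ := v₁) (v₂ := v₂) hlam ht j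
  refine ⟨?_, rfl, hE, hS⟩
  simpa using (hS.add_const (m2 v₁ v₂ lam j t)).sub
    ((hE.const_mul 2).mul_const (m1 v₁ v₂ lam j t))

/-- Corollary 5.5: as the reset rate `ξ → ∞`, the mean-square distance tends
to the second moment of the reset-free process; equivalently, both moments of
the reset process tend to `0`. -/
theorem large_reset_rate (v₁ v₂ lam t : ℝ) (hlam : 0 < lam) (ht : 0 < t)
    (hv : v₂ < v₁) (hv1 : v₁ ≠ 0) (hv2 : v₂ ≠ 0) :
    ∀ j : ℕ, (j = 1 ∨ j = 2) →
      Tendsto (fun xi => Smom v₁ v₂ lam xi j t + m2 v₁ v₂ lam j t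
          - 2 * Emom v₁ v₂ lam xi j t * m1 v₁ v₂ lam j t) atTop
        (𝓝 (m2 v₁ v₂ lam j t))
      ∧ m2 v₁ v₂ lam j t
          = t ^ 2 * (3 * vel v₁ v₂ j ^ 2 + lam * t * (v₁ ^ 2 + v₁ * v₂ + v₂ ^ 2)) /
              (3 * (1 + lam * t))
      ∧ Tendsto (fun xi => Emom v₁ v₂ lam xi j t) atTop (𝓝 0)
      ∧ Tendsto (fun xi => Smom v₁ v₂ lam xi j t) atTop (𝓝 0) :=
  large_reset_rate_general v₁ v₂ lam t hlam ht

end TelegraphReset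
end
end
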